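/- arXiv:2204.07678 — 2 statements merged into one kernel-verified Lean document; each statement's English description precedes it below -/
import Mathlib

section
/- Let L be the graph Laplacian of an irreducible nonnegative matrix and D a positive diagonal matrix. Then (L + D)⁻¹ has all entries strictly positive. -/
open Matrix Finset

attribute [local instance] Matrix.linftyOpNormedRing Matrix.linftyOpNormedAlgebra

private lemma pow_entry_aux {n : ℕ} {P Q : Matrix (Fin n) (Fin n) ℝ}
    (hP : ∀ i j, 0 ≤ P i j) (hPQ : ∀ i j, P i j ≤ Q i j) (k : ℕ) :
    ∀ i j, 0 ≤ (P ^ k) i j ∧ (P ^ k) i j ≤ (Q ^ k) i j := by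
  induction k with
  | zero =>
    intro i j
    simp only [pow_zero, Matrix.one_apply]
    split <;> norm_num
  | succ k ih =>
    intro i j
    rw [pow_succ, pow_succ, Matrix.mul_apply, Matrix.mul_apply]
    refine ⟨Finset.sum_nonneg fun l _ => mul_nonneg (ih i l).1 (hP l j),
      Finset.sum_le_sum fun l _ => mul_le_mul (ih i l).2 (hPQ l j) (hP l j)
        (le_trans (ih i l).1 (ih i l).2)⟩

/-- For an irreducible nonnegative `A` with Laplacian `L` and positive diagonal `D`,
the inverse of `L + D` is entrywise strictly positive. -/
theorem stmt9 {n : ℕ} (hn : 0 < n) (A : Matrix (Fin n) (Fin n) ℝ)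
    (hA : ∀ i j, 0 ≤ A i j) (hirr : ∀ i j, ∃ k : ℕ, 0 < (A ^ k) i j)
    (d : Fin n → ℝ) (hd : ∀ i, 0 < d i) :
    let G : Matrix (Fin n) (Fin n) ℝ :=
      Matrix.diagonal (fun i => ∑ k, A k i) - A + Matrix.diagonal d
    IsUnit G ∧ ∀ i j, 0 < G⁻¹ i j := by
  intro G
  set w : Fin n → ℝ := fun i => ∑ k, A k i with hw
  have hw0 : ∀ i, 0 ≤ w i := fun i => Finset.sum_nonneg fun k _ => hA k i
  set s : ℝ := 1 + ∑ i, (w i + d i) with hs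
  have hsi : ∀ i, w i + d i < s := by
    intro i
    have h1 : w i + d i ≤ ∑ j, (w j + d j) :=
      Finset.single_le_sum (fun j _ => add_nonneg (hw0 j) (hd j).le) (Finset.mem_univ i)
    simp only [hs]; linarith
  have hs0 : 0 < s := by
    have i0 : Fin n := ⟨0, hn⟩
    have := hsi i0
    have := hd i0
    have := hw0 i0
    linarith
  have hGentry : ∀ i j, G i j = (if i = j then w i + d i else 0) - A i j := by
    intro i j
    simp [G, Matrix.sub_apply, Matrix.add_apply, Matrix.diagonal_apply]
    split <;> ring
  set C : Matrix (Fin n) (Fin n) ℝ := s • (1 : Matrix (Fin n) (Fin n) ℝ) - Gᵀ with hC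
  have hCentry : ∀ i j, C i j = (if i = j then s - w i - d i else 0) + A j i := by
    intro i j
    simp only [hC, Matrix.sub_apply, Matrix.smul_apply, Matrix.one_apply,
      Matrix.transpose_apply, hGentry j i, smul_eq_mul]
    rcases eq_or_ne i j with h | h
    · subst h; simp; ring
    · simp [h, Ne.symm h]
  have hC0 : ∀ i j, 0 ≤ C i j := by
    intro i j
    rw [hCentry]
    refine add_nonneg ?_ (hA j i)
    split
    · next h => subst h; linarith [hsi i]
    · exact le_refl 0
  have hAC : ∀ i j, Aᵀ i j ≤ C i j := by
    intro i j
    rw [hCentry, Matrix.transpose_apply]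
    have : (0:ℝ) ≤ if i = j then s - w i - d i else 0 := by
      split
      · next h => subst h; linarith [hsi i]
      · exact le_refl 0
    linarith
  have hCrow : ∀ i, ∑ j, C i j = s - d i := by
    intro i
    simp only [hCentry]
    rw [Finset.sum_add_distrib, Finset.sum_ite_eq Finset.univ i (fun _ => s - w i - d i)]
    simp [hw]
    ring
  set T : Matrix (Fin n) (Fin n) ℝ := s⁻¹ • C with hT
  have hT0 : ∀ i j, 0 ≤ T i j := fun i j =>
    mul_nonneg (inv_nonneg.mpr hs0.le) (hC0 i j)
  have hTnorm : ‖T‖ < 1 := by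
    rw [Matrix.linfty_opNorm_def]
    rw [show (1:ℝ) = ((1:NNReal):ℝ) by norm_num, NNReal.coe_lt_coe]
    rw [Finset.sup_lt_iff (by norm_num : (⊥ : NNReal) < 1)]
    intro i _
    rw [show (1:NNReal) = ‖(1:ℝ)‖₊ by simp]
    rw [← NNReal.coe_lt_coe]
    push_cast
    have : ∑ j, ‖T i j‖ = ∑ j, T i j := by
      refine Finset.sum_congr rfl fun j _ => ?_
      rw [Real.norm_eq_abs, abs_of_nonneg (hT0 i j)]
    rw [this]
    have : ∑ j, T i j = s⁻¹ * (s - d i) := by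
      simp only [hT, Matrix.smul_apply, smul_eq_mul, ← Finset.mul_sum, hCrow i]
    rw [this]
    have hdi := hd i
    rw [show ‖(1:ℝ)‖ = 1 by simp]
    rw [mul_sub, inv_mul_cancel₀ (ne_of_gt hs0)]
    have : 0 < s⁻¹ * d i := mul_pos (inv_pos.mpr hs0) hdi
    linarith
  have hsum : Summable (fun k : ℕ => T ^ k) := summable_geometric_of_norm_lt_one hTnorm
  set u : (Matrix (Fin n) (Fin n) ℝ)ˣ := Units.oneSub T hTnorm with hu
  set V : Matrix (Fin n) (Fin n) ℝ := ∑' k : ℕ, T ^ k with hV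
  have huinv : (↑u⁻¹ : Matrix (Fin n) (Fin n) ℝ) = V := rfl
  -- entrywise tsum
  have hVentry : ∀ i j, V i j = ∑' k : ℕ, (T ^ k) i j := by
    intro i j
    let ev : Matrix (Fin n) (Fin n) ℝ →ₗ[ℝ] ℝ :=
      { toFun := fun M => M i j, map_add' := fun _ _ => rfl, map_smul' := fun _ _ => rfl }
    have hc : Continuous ev := LinearMap.continuous_of_finiteDimensional ev
    exact ((hsum.hasSum.map ev hc).tsum_eq).symm
  have hVsummable : ∀ i j, Summable (fun k : ℕ => (T ^ k) i j) := by
    intro i j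
    let ev : Matrix (Fin n) (Fin n) ℝ →ₗ[ℝ] ℝ :=
      { toFun := fun M => M i j, map_add' := fun _ _ => rfl, map_smul' := fun _ _ => rfl }
    have hc : Continuous ev := LinearMap.continuous_of_finiteDimensional ev
    exact ⟨_, hsum.hasSum.map ev hc⟩
  have hTk0 : ∀ (k : ℕ) i j, 0 ≤ (T ^ k) i j := fun k i j =>
    (pow_entry_aux hT0 (fun i j => le_refl _) k i j).1
  have hTkpos : ∀ i j, ∃ m : ℕ, 0 < (T ^ m) i j := by
    intro i j
    obtain ⟨k, hk⟩ := hirr j i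
    refine ⟨k, ?_⟩
    have h1 : (Aᵀ ^ k) i j = (A ^ k) j i := by
      rw [← Matrix.transpose_pow, Matrix.transpose_apply]
    have hA0 : ∀ i j, 0 ≤ Aᵀ i j := fun i j => hA j i
    have h2 := (pow_entry_aux hA0 hAC k i j).2
    have h3 : 0 < (C ^ k) i j := lt_of_lt_of_le (h1 ▸ hk) h2
    have h4 : (T ^ k) i j = s⁻¹ ^ k * (C ^ k) i j := by
      rw [hT, smul_pow, Matrix.smul_apply, smul_eq_mul]
    rw [h4]
    exact mul_pos (pow_pos (inv_pos.mpr hs0) k) h3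
  have hVpos : ∀ i j, 0 < V i j := by
    intro i j
    obtain ⟨m, hm⟩ := hTkpos i j
    rw [hVentry i j]
    calc (0:ℝ) < (T ^ m) i j := hm
      _ ≤ ∑' k, (T ^ k) i j := Summable.le_tsum (hVsummable i j) m (fun k _ => hTk0 k i j)
  -- Gᵀ = s • (1 - T)
  have hGT : Gᵀ = s • ((1 : Matrix (Fin n) (Fin n) ℝ) - T) := by
    rw [smul_sub, hT, smul_smul, mul_inv_cancel₀ (ne_of_gt hs0), one_smul, hC]
    abel
  have hmul : Gᵀ * (s⁻¹ • V) = 1 := by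
    rw [hGT, Matrix.smul_mul, Matrix.mul_smul, smul_smul, mul_inv_cancel₀ (ne_of_gt hs0),
      one_smul]
    have := u.val_inv
    rw [hu] at this
    rw [← huinv, ← Units.val_oneSub T hTnorm]; exact this
  have hleft : (s⁻¹ • V)ᵀ * G = 1 := by
    have := congrArg Matrix.transpose hmul
    rwa [Matrix.transpose_mul, Matrix.transpose_transpose, Matrix.transpose_one] at this
  refine ⟨(Matrix.isUnit_iff_isUnit_det G).mpr (Matrix.isUnit_det_of_left_inverse hleft), ?_⟩
  intro i j
  rw [Matrix.inv_eq_left_inv hleft]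
  rw [Matrix.transpose_apply, Matrix.smul_apply, smul_eq_mul]
  exact mul_pos (inv_pos.mpr hs0) (hVpos j i)
end

section
/- Let K be the 2n×2n block matrix [[0, D_β D_{μᵥ}⁻¹],[D_{βᵥ} G⁻¹, 0]] with D_β, D_{βᵥ}, D_{μᵥ} diagonal with positive diagonals and G invertible. Then the spectral radius of K equals the square root of the spectral radius of G⁻¹ D_β D_{μᵥ}⁻¹ D_{βᵥ}, provided the latter matrix has a nonnegative real spectral radius eigenvalue (e.g. when G⁻¹ > 0 entrywise). -/
open scoped ENNReal

lemma aux_sup_diff_zero (S : Set ℂ) :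
    (⨆ k ∈ S \ {0}, (‖k‖₊ : ℝ≥0∞)) = ⨆ k ∈ S, (‖k‖₊ : ℝ≥0∞) := by
  refine le_antisymm (biSup_mono Set.diff_subset) (iSup₂_le fun k hk => ?_)
  rcases eq_or_ne k 0 with rfl | h
  · simp
  · exact le_iSup₂ (f := fun k (_ : k ∈ S \ {0}) => (‖k‖₊ : ℝ≥0∞)) k ⟨hk, h⟩

lemma aux_spectralRadius_mul_comm {A : Type*} [Ring A] [Algebra ℂ A] (a b : A) :
    spectralRadius ℂ (a * b) = spectralRadius ℂ (b * a) := by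
  rw [spectralRadius, spectralRadius, ← aux_sup_diff_zero (spectrum ℂ (a * b)),
    ← aux_sup_diff_zero (spectrum ℂ (b * a)), spectrum.nonzero_mul_comm]

lemma aux_block_spectrum {m : Type*} [Fintype m] [DecidableEq m]
    (P Q : Matrix m m ℂ) :
    spectrum ℂ (Matrix.fromBlocks P 0 0 Q) = spectrum ℂ P ∪ spectrum ℂ Q := by
  ext k
  simp only [Set.mem_union, spectrum.mem_iff]
  have h1 : algebraMap ℂ (Matrix (m ⊕ m) (m ⊕ m) ℂ) k - Matrix.fromBlocks P 0 0 Q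
      = Matrix.fromBlocks (algebraMap ℂ (Matrix m m ℂ) k - P) 0 0
        (algebraMap ℂ (Matrix m m ℂ) k - Q) := by
    ext (i | i) (j | j) <;>
      simp [Matrix.algebraMap_eq_diagonal, Matrix.diagonal, Matrix.fromBlocks,
        Matrix.sub_apply, Sum.elim, Pi.algebraMap_apply]
  rw [h1, Matrix.isUnit_iff_isUnit_det, Matrix.det_fromBlocks_zero₂₁,
    Matrix.isUnit_iff_isUnit_det (algebraMap ℂ (Matrix m m ℂ) k - P),
    Matrix.isUnit_iff_isUnit_det (algebraMap ℂ (Matrix m m ℂ) k - Q),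
    isUnit_iff_ne_zero, isUnit_iff_ne_zero, isUnit_iff_ne_zero, mul_ne_zero_iff]
  tauto

lemma aux_rpow_iSup {ι : Sort*} (f : ι → ℝ≥0∞) :
    (⨆ i, f i) ^ (2 : ℝ) = ⨆ i, f i ^ (2 : ℝ) := by
  simpa only [ENNReal.orderIsoRpow_apply] using (ENNReal.orderIsoRpow 2 two_pos).map_iSup f

lemma aux_spectralRadius_sq {m : Type*} [Fintype m] [DecidableEq m]
    (a : Matrix m m ℂ) :
    spectralRadius ℂ (a ^ 2) = (spectralRadius ℂ a) ^ (2 : ℝ) := by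
  rw [spectralRadius, spectralRadius, spectrum.map_pow_of_pos a two_pos, iSup_image,
    iSup_subtype', iSup_subtype', aux_rpow_iSup]
  congr 1
  funext k
  rw [nnnorm_pow, ENNReal.coe_pow, ← ENNReal.rpow_natCast]
  norm_num

lemma aux_map_mul {m : Type*} [Fintype m] (X Y : Matrix m m ℝ) :
    (X * Y).map Complex.ofReal = X.map Complex.ofReal * Y.map Complex.ofReal :=
  Matrix.map_mul (f := Complex.ofRealHom)

/-- The spectral radius of `K = [[0, D_β D_{μᵥ}⁻¹], [D_{βᵥ} G⁻¹, 0]]` equals the square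
root of the spectral radius of `G⁻¹ D_β D_{μᵥ}⁻¹ D_{βᵥ}` when `G⁻¹` is entrywise
positive. -/
theorem stmt13 {n : ℕ} (dβ dβv dμv : Fin n → ℝ)
    (hβ : ∀ i, 0 < dβ i) (hβv : ∀ i, 0 < dβv i) (hμv : ∀ i, 0 < dμv i)
    (G : Matrix (Fin n) (Fin n) ℝ) (hG : IsUnit G) (hGinv : ∀ i j, 0 < G⁻¹ i j) :
    spectralRadius ℂ
        ((Matrix.fromBlocks 0 (Matrix.diagonal dβ * (Matrix.diagonal dμv)⁻¹)
          (Matrix.diagonal dβv * G⁻¹) 0).map Complex.ofReal)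
      = (spectralRadius ℂ
          ((G⁻¹ * Matrix.diagonal dβ * (Matrix.diagonal dμv)⁻¹ *
            Matrix.diagonal dβv).map Complex.ofReal)) ^ (1 / 2 : ℝ) := by
  set A₀ : Matrix (Fin n) (Fin n) ℝ := Matrix.diagonal dβ * (Matrix.diagonal dμv)⁻¹ with hA₀
  set B₀ : Matrix (Fin n) (Fin n) ℝ := Matrix.diagonal dβv * G⁻¹ with hB₀
  set Ac := A₀.map Complex.ofReal
  set Bc := B₀.map Complex.ofReal
  set Kc := (Matrix.fromBlocks 0 A₀ B₀ 0).map Complex.ofReal with hKc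
  set Mc := (G⁻¹ * Matrix.diagonal dβ * (Matrix.diagonal dμv)⁻¹ *
      Matrix.diagonal dβv).map Complex.ofReal with hMc
  have hKblocks : Kc = Matrix.fromBlocks 0 Ac Bc 0 := by
    rw [hKc, Matrix.fromBlocks_map]
    congr 1 <;> ext i j <;> simp
  have hKsq : Kc ^ 2 = Matrix.fromBlocks (Ac * Bc) 0 0 (Bc * Ac) := by
    rw [hKblocks, pow_two, Matrix.fromBlocks_multiply]
    simp
  have hBA : spectralRadius ℂ (Bc * Ac) = spectralRadius ℂ Mc := by
    have h1 : Bc * Ac = (Matrix.diagonal dβv).map Complex.ofReal *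
        ((G⁻¹ * Matrix.diagonal dβ * (Matrix.diagonal dμv)⁻¹).map Complex.ofReal) := by
      rw [← aux_map_mul, ← aux_map_mul]
      congr 1
      rw [hB₀, hA₀]
      noncomm_ring
    have h2 : Mc = ((G⁻¹ * Matrix.diagonal dβ * (Matrix.diagonal dμv)⁻¹).map Complex.ofReal) *
        (Matrix.diagonal dβv).map Complex.ofReal := by
      rw [hMc, ← aux_map_mul]
    rw [h1, h2, aux_spectralRadius_mul_comm]
  have hmain : spectralRadius ℂ Kc ^ (2 : ℝ) = spectralRadius ℂ Mc := by
    rw [← aux_spectralRadius_sq, hKsq]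
    rw [spectralRadius, aux_block_spectrum, iSup_union]
    rw [← spectralRadius, ← spectralRadius, aux_spectralRadius_mul_comm, hBA, sup_idem]
  rw [← hmain, ← ENNReal.rpow_mul]
  norm_num
end
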